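/- For the weight φ(z₁,z₂) = |z₁|⁴ + |z₁z₂|² on ℂ², the smallest eigenvalue s₁(z) of the complex Hessian M_φ(z) does not satisfy lim_{z→∞} |z|² s₁(z) = +∞; in fact s₁ vanishes identically on the set {z₁ = 0}, so |z|²s₁(z) = 0 along (0, z₂) with z₂ → ∞. -/

import Mathlib

/-!
On `{z₁ = 0}` the Hessian is `diag(|z₂|², 0)`. For a diagonal matrix, a lower bound of the
Rayleigh quotient that is also an eigenvalue must be the least diagonal entry, so
`s₁(0, z₂) = 0`. Since `z₂ ↦ (0, z₂)` is a closed embedding, it sends `z₂ → ∞` to `z → ∞`,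
and along it `|z|² s₁(z)` is identically `0`.
-/

open Filter Matrix

/-- The complex Hessian of `φ(z₁,z₂) = |z₁|⁴ + |z₁z₂|²`. -/
noncomputable def hessianPhi (z : ℂ × ℂ) : Matrix (Fin 2) (Fin 2) ℂ :=
  !![(4 * ‖z.1‖ ^ 2 + ‖z.2‖ ^ 2 : ℝ), (starRingEnd ℂ) z.1 * z.2;
     z.1 * (starRingEnd ℂ) z.2, (‖z.1‖ ^ 2 : ℝ)]

open Topology

lemma isClosedEmbedding_prodMk {X Y : Type*} [TopologicalSpace X] [TopologicalSpace Y]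
    [T1Space X] (x : X) : IsClosedEmbedding (Prod.mk x : Y → X × Y) := by
  refine ⟨isEmbedding_prodMkRight x, ?_⟩
  have hrange : Set.range (Prod.mk x : Y → X × Y) = Prod.fst ⁻¹' {x} := by
    ext ⟨a, b⟩; simp [eq_comm]
  exact hrange ▸ isClosed_singleton.preimage continuous_fst

section Diagonal

variable {n : Type*} [Fintype n] [DecidableEq n]

lemma exists_eq_of_diagonal_mulVec_eq_smul {R : Type*} [CommRing R] [IsDomain R] {d : n → R}
    {μ : R} {v : n → R} (hv : v ≠ 0) (h : diagonal d *ᵥ v = μ • v) : ∃ i, d i = μ :=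
  (hasEigenvalue_toLin'_diagonal_iff d).mp <|
    Module.End.hasEigenvalue_of_hasEigenvector ⟨Module.End.mem_eigenspace_iff.mpr h, hv⟩

variable {𝕜 : Type*} [RCLike 𝕜]

lemma le_of_forall_mul_le_re_dotProduct_diagonal {d : n → ℝ} {s : ℝ}
    (h : ∀ v : n → 𝕜,
      s * ∑ i, ‖v i‖ ^ 2 ≤ RCLike.re (star v ⬝ᵥ diagonal (fun i ↦ (d i : 𝕜)) *ᵥ v))
    (i : n) : s ≤ d i := by
  simpa [diagonal_mulVec_single, Pi.single_apply, apply_ite] using h (Pi.single i 1)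

lemma isLeast_range_of_rayleigh_bound_of_diagonal_mulVec_eq_smul {d : n → ℝ} {s : ℝ}
    (hbound : ∀ v : n → 𝕜,
      s * ∑ i, ‖v i‖ ^ 2 ≤ RCLike.re (star v ⬝ᵥ diagonal (fun i ↦ (d i : 𝕜)) *ᵥ v))
    (heig : ∃ v : n → 𝕜, v ≠ 0 ∧ diagonal (fun i ↦ (d i : 𝕜)) *ᵥ v = (s : 𝕜) • v) :
    IsLeast (Set.range d) s := by
  obtain ⟨v, hv, h⟩ := heig
  obtain ⟨i, hi⟩ := exists_eq_of_diagonal_mulVec_eq_smul hv h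
  exact ⟨⟨i, RCLike.ofReal_injective hi⟩, by
    rintro _ ⟨j, rfl⟩; exact le_of_forall_mul_le_re_dotProduct_diagonal hbound j⟩

end Diagonal

lemma hessianPhi_zero_left (z₂ : ℂ) :
    hessianPhi (0, z₂) = diagonal (fun i ↦ (![‖z₂‖ ^ 2, 0] i : ℂ)) := by
  ext i j; fin_cases i <;> fin_cases j <;> simp [hessianPhi]

lemma isLeast_range_sq_zero (a : ℝ) : IsLeast (Set.range ![a ^ 2, 0]) 0 :=
  ⟨⟨1, rfl⟩, by rintro _ ⟨i, rfl⟩; fin_cases i <;> simp [sq_nonneg]⟩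

/-- For `φ(z₁,z₂) = |z₁|⁴ + |z₁z₂|²`, the smallest eigenvalue `s₁` of the complex Hessian
vanishes identically on `{z₁ = 0}`; in particular `|z|² s₁(z)` does not tend to `+∞` as
`z → ∞`, i.e. Shigekawa's condition fails. -/
theorem shigekawa_condition_fails (s₁ : ℂ × ℂ → ℝ)
    (hmin : ∀ (z : ℂ × ℂ) (v : Fin 2 → ℂ),
      s₁ z * ∑ i, ‖v i‖ ^ 2 ≤ (star v ⬝ᵥ (hessianPhi z).mulVec v).re)
    (heig : ∀ z : ℂ × ℂ, ∃ v : Fin 2 → ℂ, v ≠ 0 ∧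
      (hessianPhi z).mulVec v = (s₁ z : ℂ) • v) :
    (∀ z₂ : ℂ, s₁ (0, z₂) = 0) ∧
      ¬ Tendsto (fun z : ℂ × ℂ => ‖z‖ ^ 2 * s₁ z) (cocompact (ℂ × ℂ)) atTop := by
  have hzero (z₂ : ℂ) : s₁ (0, z₂) = 0 := by
    have hbound := hmin (0, z₂)
    have heig₀ := heig (0, z₂)
    rw [hessianPhi_zero_left] at hbound heig₀
    exact (isLeast_range_of_rayleigh_bound_of_diagonal_mulVec_eq_smul hbound heig₀).unique
      (isLeast_range_sq_zero ‖z₂‖)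
  refine ⟨hzero, fun hT => ?_⟩
  have hslice := hT.comp (isClosedEmbedding_prodMk (0 : ℂ)).tendsto_cocompact
  exact not_tendsto_const_atTop (0 : ℝ) (cocompact ℂ) (hslice.congr fun z₂ ↦ by simp [hzero])
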